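/- Let (K,m) be the infinite complete graph with weights m(i,j) = p_i·p_j, and let P be its random-walk operator. A real number λ with λ ≠ α_j for all j ≥ 1 is an eigenvalue of P if and only if both: (i) the series ∑_{j=1}^∞ α_j/(α_j − λ) converges to 1, and (ii) ∑_{j=1}^∞ p_j/(λ − α_j)² < ∞. -/

import Mathlib

open MeasureTheory

/-- A summable weighted graph on a vertex set `V`. -/
structure SummableWeightedGraph (V : Type*) where
  m : V → V → ℝ
  symm : ∀ u v, m u v = m v u
  nonneg : ∀ u v, 0 ≤ m u v
  loopless : ∀ v, m v v = 0
  summable : Summable fun p : V × V => m p.1 p.2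
  noIsolated : ∀ v, 0 < ∑' u, m v u

namespace SummableWeightedGraph

variable {V : Type*} (G : SummableWeightedGraph V)

/-- The weight of a vertex. -/
noncomputable def deg (v : V) : ℝ := ∑' u, G.m v u

/-- The weight of a set of vertices. -/
noncomputable def setWeight (S : Set V) : ℝ := ∑' v : S, G.deg v

/-- The weight of the boundary of a set of vertices. -/
noncomputable def boundaryWeight (S : Set V) : ℝ :=
  ∑' p : ↥S × ↥Sᶜ, G.m p.1 p.2

/-- The Cheeger constant. -/
noncomputable def cheegerConst : ℝ :=
  sInf { r : ℝ | ∃ S : Set V, S.Nonempty ∧ G.setWeight S ≤ G.setWeight Sᶜ ∧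
    r = G.boundaryWeight S / G.setWeight S }

/-- The weighted counting measure on vertices. -/
noncomputable def measure [MeasurableSpace V] : Measure V :=
  Measure.sum fun v => ENNReal.ofReal (G.deg v) • Measure.dirac v

/-- The normalised Laplacian, characterised by its pointwise formula. -/
def IsLaplacian [MeasurableSpace V]
    (L : Lp ℝ 2 G.measure →L[ℝ] Lp ℝ 2 G.measure) : Prop :=
  ∀ f : Lp ℝ 2 G.measure, ∀ᵐ v ∂G.measure,
    L f v = f v - (G.deg v)⁻¹ * ∑' u, G.m v u * f u

end SummableWeightedGraph

/-- `lam` is an eigenvalue of the bounded operator `T`. -/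
def IsEigenvalue {H : Type*} [NormedAddCommGroup H] [NormedSpace ℝ H]
    (T : H →L[ℝ] H) (lam : ℝ) : Prop :=
  ∃ f : H, f ≠ 0 ∧ T f = lam • f

/-- The quantities `αᵢ = -pᵢ/(1-pᵢ)` attached to the infinite complete graph. -/
noncomputable def alpha (p : ℕ → ℝ) (j : ℕ) : ℝ := -p j / (1 - p j)

/-!
Since every edge weight factors as `p i * p j`, the random walk sees a function `F` only
through the single number `S = ∑ p j F j`: `(P F) i = (S - p i F i) / (1 - p i)`. Hence
`P F = λ F` forces `F i = S / ((1 - p i) (λ - α i))`, i.e. `F = S • F₀` for the explicit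
vector `F₀ = eigenCandidate p λ`, `F₀ i = ((1 - p i) (λ - α i))⁻¹`. As `p j F₀ j = α j / (α j - λ)`, the consistency
condition `S = ∑ p j F j` with `S ≠ 0` is condition (i); and `F₀ ∈ L²` is condition (ii),
because `m(i) F₀(i)² = p i / ((1 - p i) (λ - α i)²)` and `1 - p i` is bounded away from `0`.
-/

open scoped ENNReal

theorem ENNReal.tsum_ofReal_ne_top_iff_summable {ι : Type*} {f : ι → ℝ} (hf : 0 ≤ f) :
    ∑' i, ENNReal.ofReal (f i) ≠ ∞ ↔ Summable f := by
  lift f to ι → NNReal using hf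
  simp only [ENNReal.ofReal_coe_nnreal, ENNReal.tsum_coe_ne_top_iff_summable, NNReal.summable_coe]

namespace SummableWeightedGraph

variable {V : Type*} (G : SummableWeightedGraph V)

theorem deg_pos (v : V) : 0 < G.deg v := G.noIsolated v

variable [MeasurableSpace V]

section MeasurableSingletonClass

variable [MeasurableSingletonClass V]

theorem measure_singleton (v : V) : G.measure {v} = ENNReal.ofReal (G.deg v) := by
  rw [SummableWeightedGraph.measure, Measure.sum_apply _ (MeasurableSet.singleton v),
    tsum_eq_single v fun u hu => by simp [hu]]
  simp

theorem ae_measure_eq_top : ae G.measure = ⊤ :=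
  ae_eq_top.2 fun v => by simp [measure_singleton, G.deg_pos v]

theorem ae_iff_forall {Q : V → Prop} : (∀ᵐ v ∂G.measure, Q v) ↔ ∀ v, Q v := by
  rw [ae_measure_eq_top, Filter.eventually_top]

theorem lintegral_measure (g : V → ℝ≥0∞) :
    ∫⁻ v, g v ∂G.measure = ∑' v, ENNReal.ofReal (G.deg v) * g v := by
  simp [SummableWeightedGraph.measure, lintegral_sum_measure, lintegral_smul_measure]

end MeasurableSingletonClass

variable [DiscreteMeasurableSpace V]

theorem memLp_two_iff_summable (f : V → ℝ) :
    MemLp f 2 G.measure ↔ Summable fun v => G.deg v * f v ^ 2 := by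
  have hf : AEStronglyMeasurable f G.measure := Measurable.of_discrete.aestronglyMeasurable
  have hsq : 0 ≤ᵐ[G.measure] fun v => f v ^ 2 :=
    Filter.Eventually.of_forall fun v => sq_nonneg _
  rw [memLp_two_iff_integrable_sq hf, Integrable, hasFiniteIntegral_iff_ofReal hsq,
    lintegral_measure, lt_top_iff_ne_top, ← ENNReal.tsum_ofReal_ne_top_iff_summable
      fun v => mul_nonneg (G.deg_pos v).le (sq_nonneg _)]
  simp only [ENNReal.ofReal_mul (G.deg_pos _).le]
  exact and_iff_right Measurable.of_discrete.aestronglyMeasurable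

theorem isEigenvalue_iff_exists_summable {P : Lp ℝ 2 G.measure →L[ℝ] Lp ℝ 2 G.measure}
    (hP : ∀ f : Lp ℝ 2 G.measure, ∀ᵐ v ∂G.measure,
      P f v = (G.deg v)⁻¹ * ∑' u, G.m v u * f u)
    (lam : ℝ) :
    IsEigenvalue P lam ↔ ∃ F : V → ℝ, F ≠ 0 ∧ (Summable fun v => G.deg v * F v ^ 2) ∧
      ∀ v, (G.deg v)⁻¹ * ∑' u, G.m v u * F u = lam * F v := by
  constructor
  · rintro ⟨f, hf0, hf⟩
    refine ⟨f, fun h => hf0 (Lp.ext ?_), (G.memLp_two_iff_summable f).1 (Lp.memLp f), ?_⟩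
    · filter_upwards [Lp.coeFn_zero ℝ 2 G.measure] with v hv
      rw [hv, h, Pi.zero_apply]
    · refine (G.ae_iff_forall).1 ?_
      filter_upwards [hP f, Lp.coeFn_smul lam f] with v hPv hsmul
      rw [← hPv, hf, hsmul, Pi.smul_apply, smul_eq_mul]
  · rintro ⟨F, hF0, hFL2, hF⟩
    have hmem := (G.memLp_two_iff_summable F).2 hFL2
    have hcoe : ∀ v, hmem.toLp F v = F v := (G.ae_iff_forall).1 hmem.coeFn_toLp
    refine ⟨hmem.toLp F, fun h => hF0 (funext fun v => ?_), Lp.ext ?_⟩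
    · rw [← hcoe v, h]
      exact (G.ae_iff_forall).1 (Lp.coeFn_zero ℝ 2 G.measure) v
    · filter_upwards [hP (hmem.toLp F), Lp.coeFn_smul lam (hmem.toLp F)] with v hPv hsmul
      simp only [hPv, hsmul, Pi.smul_apply, smul_eq_mul, hcoe, hF]

end SummableWeightedGraph

section CompleteGraph

variable {p : ℕ → ℝ}

theorem exists_pos_le_one_sub (hp : ∀ i, 0 < p i) (hsum : HasSum p 1) :
    ∃ c > 0, ∀ i, c ≤ 1 - p i := by
  have hpair : ∀ i j, i ≠ j → p i + p j ≤ 1 := fun i j hij => by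
    simpa [Finset.sum_pair hij] using sum_le_hasSum {i, j} (fun k _ => (hp k).le) hsum
  refine ⟨min (p 0) (p 1), lt_min (hp 0) (hp 1), fun i => ?_⟩
  rcases eq_or_ne i 0 with rfl | hi
  · linarith [min_le_right (p 0) (p 1), hpair 0 1 zero_ne_one]
  · linarith [min_le_left (p 0) (p 1), hpair i 0 hi]

theorem one_sub_pos_of_hasSum (hp : ∀ i, 0 < p i) (hsum : HasSum p 1) (i : ℕ) : 0 < 1 - p i :=
  have ⟨_, hc, hcq⟩ := exists_pos_le_one_sub hp hsum
  hc.trans_le (hcq i)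

noncomputable def eigenCandidate (p : ℕ → ℝ) (lam : ℝ) (j : ℕ) : ℝ :=
  ((1 - p j) * (lam - alpha p j))⁻¹

theorem mul_eigenCandidate (lam : ℝ) (j : ℕ) :
    p j * eigenCandidate p lam j = alpha p j / (alpha p j - lam) := by
  have hα : p j / (1 - p j) = -alpha p j := by rw [alpha, neg_div, neg_neg]
  rw [eigenCandidate, mul_inv, ← mul_assoc, ← div_eq_mul_inv (p j), hα, ← div_eq_mul_inv,
    ← neg_sub, neg_div_neg_eq]

theorem one_sub_mul_deg_mul_eigenCandidate_sq {lam : ℝ} {j : ℕ} (hq : 1 - p j ≠ 0) :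
    (1 - p j) * (p j * (1 - p j) * eigenCandidate p lam j ^ 2) = p j / (lam - alpha p j) ^ 2 := by
  rw [eigenCandidate, inv_pow, mul_pow]
  field_simp

variable {G : SummableWeightedGraph ℕ} (hG : ∀ i j, G.m i j = if i = j then 0 else p i * p j)
include hG

theorem hasSum_m_mul {F : ℕ → ℝ} {S : ℝ} (hS : HasSum (fun u => p u * F u) S) (v : ℕ) :
    HasSum (fun u => G.m v u * F u) (p v * (S - p v * F v)) := by
  have hupdate : Function.update (fun u => p v * (p u * F u)) v 0 = fun u => G.m v u * F u := by
    ext u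
    rcases eq_or_ne u v with rfl | huv
    · simp [hG]
    · simp [hG, huv, huv.symm, mul_assoc]
  rw [← hupdate, show p v * (S - p v * F v) = 0 - p v * (p v * F v) + p v * S by ring]
  exact (hS.mul_left (p v)).update v 0

theorem deg_eq (hsum : HasSum p 1) (v : ℕ) : G.deg v = p v * (1 - p v) := by
  simpa [SummableWeightedGraph.deg] using (hasSum_m_mul hG (F := 1) (by simpa using hsum) v).tsum_eq

variable (hp : ∀ i, 0 < p i) (hsum : HasSum p 1)
include hp hsum

theorem summable_mul_of_summable_deg_mul_sq {F : ℕ → ℝ}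
    (hF : Summable fun v => G.deg v * F v ^ 2) : Summable fun v => p v * F v := by
  obtain ⟨c, hc, hcq⟩ := exists_pos_le_one_sub hp hsum
  refine .of_norm_bounded (hsum.summable.add (hF.mul_left c⁻¹)) fun v => ?_
  have hpF : p v * F v ^ 2 ≤ c⁻¹ * (G.deg v * F v ^ 2) := by
    rw [deg_eq hG hsum, le_inv_mul_iff₀ hc]
    have := mul_le_mul_of_nonneg_right (hcq v) (mul_nonneg (hp v).le (sq_nonneg (F v)))
    linarith
  rw [Real.norm_eq_abs, abs_mul, abs_of_pos (hp v)]
  have hF1 : |F v| ≤ 1 + F v ^ 2 := by nlinarith [sq_abs (F v), abs_nonneg (F v)]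
  nlinarith [hp v]

theorem summable_deg_mul_eigenCandidate_sq_iff (lam : ℝ) :
    (Summable fun v => G.deg v * eigenCandidate p lam v ^ 2) ↔
      Summable fun j => p j / (lam - alpha p j) ^ 2 := by
  obtain ⟨c, hc, hcq⟩ := exists_pos_le_one_sub hp hsum
  have hnonneg : ∀ v, 0 ≤ G.deg v * eigenCandidate p lam v ^ 2 :=
    fun v => mul_nonneg (G.deg_pos v).le (sq_nonneg _)
  have hterm : ∀ v, p v / (lam - alpha p v) ^ 2 =
      (1 - p v) * (G.deg v * eigenCandidate p lam v ^ 2) := fun v => by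
    rw [deg_eq hG hsum, one_sub_mul_deg_mul_eigenCandidate_sq (hc.trans_le (hcq v)).ne']
  simp only [hterm]
  constructor
  · refine fun h => .of_nonneg_of_le (fun v => ?_) (fun v => ?_) h
    · exact mul_nonneg (hc.le.trans (hcq v)) (hnonneg v)
    · exact mul_le_of_le_one_left (hnonneg v) (by linarith [hp v])
  · refine fun h => .of_nonneg_of_le hnonneg (fun v => ?_) (h.mul_left c⁻¹)
    rw [le_inv_mul_iff₀ hc]
    exact mul_le_mul_of_nonneg_right (hcq v) (hnonneg v)

theorem randomWalk_apply_eq_mul_iff {F : ℕ → ℝ} {S : ℝ} (hS : HasSum (fun u => p u * F u) S)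
    {lam : ℝ} {v : ℕ} (hlam : lam ≠ alpha p v) :
    (G.deg v)⁻¹ * ∑' u, G.m v u * F u = lam * F v ↔ F v = S * eigenCandidate p lam v := by
  have hq : 1 - p v ≠ 0 := (one_sub_pos_of_hasSum hp hsum v).ne'
  have hd : (1 - p v) * (lam - alpha p v) ≠ 0 := mul_ne_zero hq (sub_ne_zero.2 hlam)
  rw [(hasSum_m_mul hG hS v).tsum_eq, deg_eq hG hsum, eigenCandidate, ← div_eq_mul_inv,
    eq_div_iff hd, inv_mul_eq_iff_eq_mul₀ (mul_ne_zero (hp v).ne' hq), alpha]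
  field_simp
  constructor
  · intro h
    have := mul_left_cancel₀ (hp v).ne' (h.trans (by ring : _ = p v * (F v * (1 - p v) * lam)))
    linarith
  · intro h
    rw [← h]
    ring

end CompleteGraph

open SummableWeightedGraph in
/-- eigenvalue characterisation for the random-walk operator of the
infinite complete graph. -/
theorem eigenvalue_characterisation_complete_graph (p : ℕ → ℝ) (hp : ∀ i, 0 < p i)
    (hsum : HasSum p 1) (G : SummableWeightedGraph ℕ)
    (hG : ∀ i j, G.m i j = if i = j then 0 else p i * p j)
    (P : Lp ℝ 2 G.measure →L[ℝ] Lp ℝ 2 G.measure)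
    (hP : ∀ f : Lp ℝ 2 G.measure, ∀ᵐ v ∂G.measure,
      P f v = (G.deg v)⁻¹ * ∑' u, G.m v u * f u)
    (lam : ℝ) (hlam : ∀ j, lam ≠ alpha p j) :
    IsEigenvalue P lam ↔
      (HasSum (fun j => alpha p j / (alpha p j - lam)) 1 ∧
        Summable fun j => p j / (lam - alpha p j) ^ 2) := by
  rw [G.isEigenvalue_iff_exists_summable hP lam,
    ← summable_deg_mul_eigenCandidate_sq_iff hG hp hsum]
  constructor
  · rintro ⟨F, hF0, hFL2, hF⟩
    obtain ⟨S, hS⟩ := summable_mul_of_summable_deg_mul_sq hG hp hsum hFL2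
    have hFS : F = fun v => S * eigenCandidate p lam v :=
      funext fun v => (randomWalk_apply_eq_mul_iff hG hp hsum hS (hlam v)).1 (hF v)
    have hS0 : S ≠ 0 := by
      rintro rfl
      exact hF0 (hFS.trans (funext fun v => zero_mul _))
    subst hFS
    refine ⟨?_, ?_⟩
    · rw [← hasSum_mul_left_iff hS0, mul_one]
      simpa only [← mul_eigenCandidate, mul_left_comm] using hS
    · rw [← summable_mul_left_iff (pow_ne_zero 2 hS0)]
      simpa only [mul_pow, mul_left_comm] using hFL2
  · rintro ⟨hi, hii⟩
    have hS : HasSum (fun u => p u * eigenCandidate p lam u) 1 := by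
      simpa only [mul_eigenCandidate] using hi
    refine ⟨eigenCandidate p lam, fun h => ?_, hii,
      fun v => (randomWalk_apply_eq_mul_iff hG hp hsum hS (hlam v)).2 (one_mul _).symm⟩
    exact inv_ne_zero (mul_ne_zero (one_sub_pos_of_hasSum hp hsum 0).ne'
      (sub_ne_zero.2 (hlam 0))) (congrFun h 0)
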